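/- If π is a prime of ℤ[ω], n ≡ 1 (mod 3), π² divides n, and π does not divide r, then g(r, n) = 0. -/

import Mathlib

/-- The ring of Eisenstein integers `ℤ[ω]`, represented as pairs `a + b·ω`. -/
@[ext]
structure Eisenstein where
  a : ℤ
  b : ℤ

namespace Eisenstein

instance : Zero Eisenstein := ⟨⟨0, 0⟩⟩
instance : One Eisenstein := ⟨⟨1, 0⟩⟩
instance : Add Eisenstein := ⟨fun x y => ⟨x.a + y.a, x.b + y.b⟩⟩
instance : Neg Eisenstein := ⟨fun x => ⟨-x.a, -x.b⟩⟩
instance : Mul Eisenstein :=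
  ⟨fun x y => ⟨x.a * y.a - x.b * y.b, x.a * y.b + x.b * y.a - x.b * y.b⟩⟩

@[simp] lemma zero_a : (0 : Eisenstein).a = 0 := rfl
@[simp] lemma zero_b : (0 : Eisenstein).b = 0 := rfl
@[simp] lemma one_a : (1 : Eisenstein).a = 1 := rfl
@[simp] lemma one_b : (1 : Eisenstein).b = 0 := rfl
@[simp] lemma add_a (x y : Eisenstein) : (x + y).a = x.a + y.a := rfl
@[simp] lemma add_b (x y : Eisenstein) : (x + y).b = x.b + y.b := rfl
@[simp] lemma neg_a (x : Eisenstein) : (-x).a = -x.a := rfl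
@[simp] lemma neg_b (x : Eisenstein) : (-x).b = -x.b := rfl
@[simp] lemma mul_a (x y : Eisenstein) : (x * y).a = x.a * y.a - x.b * y.b := rfl
@[simp] lemma mul_b (x y : Eisenstein) : (x * y).b = x.a * y.b + x.b * y.a - x.b * y.b := rfl

instance : CommRing Eisenstein where
  add_assoc x y z := by ext <;> simp <;> ring
  zero_add x := by ext <;> simp
  add_zero x := by ext <;> simp
  add_comm x y := by ext <;> simp <;> ring
  neg_add_cancel x := by ext <;> simp
  mul_assoc x y z := by ext <;> simp <;> ring
  one_mul x := by ext <;> simp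
  mul_one x := by ext <;> simp
  left_distrib x y z := by ext <;> simp <;> ring
  right_distrib x y z := by ext <;> simp <;> ring
  mul_comm x y := by ext <;> simp <;> ring
  zero_mul x := by ext <;> simp
  mul_zero x := by ext <;> simp
  nsmul := nsmulRec
  zsmul := zsmulRec

/-- The primitive cube root of unity `ω` in `ℤ[ω]`. -/
def ω : Eisenstein := ⟨0, 1⟩

/-- Complex conjugation on `ℤ[ω]`. -/
def conj (x : Eisenstein) : Eisenstein := ⟨x.a - x.b, -x.b⟩

/-- The norm `N(a + bω) = a² − ab + b²`. -/
def norm (x : Eisenstein) : ℤ := x.a ^ 2 - x.a * x.b + x.b ^ 2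

/-- The embedding of `ℤ[ω]` into `ℂ`, with `ω ↦ e^{2πi/3}`. -/
noncomputable def toC (x : Eisenstein) : ℂ :=
  (x.a : ℂ) + (x.b : ℂ) * Complex.exp (2 * Real.pi * Complex.I / 3)

/-- `R` is a complete system of residues modulo `n` in `ℤ[ω]`. -/
def IsResidueSystem (n : Eisenstein) (R : Finset Eisenstein) : Prop :=
  ∀ x : Eisenstein, ∃! d, d ∈ R ∧ n ∣ x - d

/-- `ě(z) = exp(2πi(z + z̄))`. -/
noncomputable def eE (z : ℂ) : ℂ :=
  Complex.exp (2 * Real.pi * Complex.I * (z + (starRingEnd ℂ) z))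

/-- `χ` is the cubic residue symbol `(m/n)₃` on `ℤ[ω]` (with values `0, 1, ω, ω²` in `ℤ[ω]`):
it is completely multiplicative in both arguments and is determined at prime moduli `π ∤ 3` by
`(m/π)₃ ≡ m^{(N(π)−1)/3} (mod π)`, `(m/π)₃ ∈ {1, ω, ω²}` for `π ∤ m`, and `(m/π)₃ = 0` for
`π ∣ m`. -/
def IsCubicResidueSymbol (χ : Eisenstein → Eisenstein → Eisenstein) : Prop :=
  (∀ m₁ m₂ n, χ (m₁ * m₂) n = χ m₁ n * χ m₂ n) ∧
  (∀ m n₁ n₂, χ m (n₁ * n₂) = χ m n₁ * χ m n₂) ∧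
  (∀ m π : Eisenstein, Prime π → ¬ π ∣ 3 → π ∣ m → χ m π = 0) ∧
  (∀ m π : Eisenstein, Prime π → ¬ π ∣ 3 → ¬ π ∣ m →
    χ m π ∈ ({1, ω, ω ^ 2} : Set Eisenstein) ∧
      π ∣ m ^ ((norm π - 1) / 3).toNat - χ m π)

/-- The generalized cubic Gauss sum `g(r,n) = Σ_{x mod n} (x/n)₃ ě(rx/n)`, computed with respect
to a complete residue system `R` modulo `n`. -/
noncomputable def gSum (χ : Eisenstein → Eisenstein → Eisenstein) (r n : Eisenstein)
    (R : Finset Eisenstein) : ℂ :=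
  ∑ x ∈ R, toC (χ x n) * eE (toC r * toC x / toC n)

end Eisenstein

/-!
Write `n = π² m`. Since `(x/n)₃ = (x/π)₃² (x/m)₃` and the cubic symbol modulo `d` depends only on
the residue of `x` modulo `d` (factor `d` into primes, `ℤ[ω]` being Euclidean), translating the
summation variable by `π m s` leaves `(x/n)₃` unchanged and multiplies `ě(rx/n)` by `ě(rs/π)`.
Translation permutes a residue system, so `g(r,n) = ě(rs/π) g(r,n)` for every `s`. If `g(r,n) ≠ 0`,
then `ě(rs/π) = 1` for `s = 1` and `s = ω`, i.e. `N(π)` divides the traces of `r π̄` and `r π̄ ω`,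
which forces `π ∣ 3r`. But `π ∤ 3` because `π ∣ n` and `n ≡ 1 (mod 3)`, and `π ∤ r`.
-/

namespace Eisenstein

@[simp] lemma sub_a (x y : Eisenstein) : (x - y).a = x.a - y.a := by
  rw [sub_eq_add_neg, sub_eq_add_neg, add_a, neg_a]

@[simp] lemma sub_b (x y : Eisenstein) : (x - y).b = x.b - y.b := by
  rw [sub_eq_add_neg, sub_eq_add_neg, add_b, neg_b]

@[simp] lemma conj_a (x : Eisenstein) : (conj x).a = x.a - x.b := rfl
@[simp] lemma conj_b (x : Eisenstein) : (conj x).b = -x.b := rfl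
@[simp] lemma ω_a : ω.a = 0 := rfl
@[simp] lemma ω_b : ω.b = 1 := rfl

lemma three_eq : (3 : Eisenstein) = ⟨3, 0⟩ := by
  rw [show (3 : Eisenstein) = 1 + 1 + 1 by norm_num]
  ext <;> simp

lemma mul_conj (x : Eisenstein) : x * conj x = ⟨norm x, 0⟩ := by
  ext <;> simp [norm] <;> ring

lemma norm_mul (x y : Eisenstein) : norm (x * y) = norm x * norm y := by
  simp only [norm, mul_a, mul_b]; ring

lemma norm_nonneg (x : Eisenstein) : 0 ≤ norm x := by
  simp only [norm]; nlinarith [sq_nonneg (2 * x.a - x.b), sq_nonneg x.b]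

lemma norm_eq_zero_iff {x : Eisenstein} : norm x = 0 ↔ x = 0 := by
  refine ⟨fun h => ?_, fun h => by simp [h, norm]⟩
  simp only [norm] at h
  have hb : x.b = 0 := by nlinarith [sq_nonneg (2 * x.a - x.b), sq_nonneg x.b]
  have ha : x.a = 0 := by simpa [hb] using h
  ext <;> simp [ha, hb]

lemma norm_pos {x : Eisenstein} (hx : x ≠ 0) : 0 < norm x :=
  (norm_nonneg x).lt_of_ne fun h => hx (norm_eq_zero_iff.mp h.symm)

lemma norm_eq_one_of_isUnit {x : Eisenstein} (h : IsUnit x) : norm x = 1 := by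
  obtain ⟨y, hy⟩ := h.exists_right_inv
  refine Int.eq_one_of_mul_eq_one_right (norm_nonneg x) (b := norm y) ?_
  rw [← norm_mul, hy]; rfl

lemma not_isUnit_three : ¬ IsUnit (3 : Eisenstein) := fun h => by
  have := norm_eq_one_of_isUnit h
  rw [three_eq, norm] at this
  norm_num at this

lemma conj_ne_zero {x : Eisenstein} (hx : x ≠ 0) : conj x ≠ 0 := fun h => hx <| by
  have ha := congrArg Eisenstein.a h
  have hb := congrArg Eisenstein.b h
  simp only [conj_a, conj_b, zero_a, zero_b] at ha hb
  ext <;> simp <;> omega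

instance : Nontrivial Eisenstein :=
  ⟨⟨0, 1, fun h => by simpa using congrArg Eisenstein.a h⟩⟩

instance : IsDomain Eisenstein :=
  have : NoZeroDivisors Eisenstein :=
    ⟨fun {x y} h => by
      have : norm x * norm y = 0 := by rw [← norm_mul, h]; rfl
      simpa only [mul_eq_zero, norm_eq_zero_iff] using this⟩
  NoZeroDivisors.to_isDomain _

/-- The quotient `x * conj y / N(y)`, rounded coordinatewise to the nearest integer. -/
def roundDiv (x y : Eisenstein) : Eisenstein :=
  ⟨(2 * (x * conj y).a + norm y) / (2 * norm y), (2 * (x * conj y).b + norm y) / (2 * norm y)⟩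

lemma sq_two_mul_sub_round_le {u D : ℤ} (hD : 0 < D) :
    (2 * (u - (2 * u + D) / (2 * D) * D)) ^ 2 ≤ D ^ 2 := by
  have h1 := Int.mul_ediv_add_emod (2 * u + D) (2 * D)
  have h2 := Int.emod_nonneg (2 * u + D) (by omega : (2 * D : ℤ) ≠ 0)
  have h3 := Int.emod_lt_of_pos (2 * u + D) (by omega : (0 : ℤ) < 2 * D)
  nlinarith

lemma norm_sub_mul_roundDiv_lt (x : Eisenstein) {y : Eisenstein} (hy : y ≠ 0) :
    norm (x - y * roundDiv x y) < norm y := by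
  have hD := norm_pos hy
  set D := norm y
  set w := x * conj y
  set u := w.a - (roundDiv x y).a * D
  set v := w.b - (roundDiv x y).b * D
  have hu : (2 * u) ^ 2 ≤ D ^ 2 := sq_two_mul_sub_round_le hD
  have hv : (2 * v) ^ 2 ≤ D ^ 2 := sq_two_mul_sub_round_le hD
  -- `(x - y q) conj y = u + v ω` with `|u|, |v| ≤ D / 2`, so `N(x - y q) D ≤ 3 D² / 4`
  have key : norm (x - y * roundDiv x y) * D = u ^ 2 - u * v + v ^ 2 := by
    have h1 : (x - y * roundDiv x y) * conj y = w - roundDiv x y * ⟨D, 0⟩ := by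
      rw [← mul_conj y]; ring
    have h2 := norm_mul (x - y * roundDiv x y) (conj y)
    rw [h1, show norm (conj y) = D by simp only [D, norm, conj_a, conj_b]; ring] at h2
    rw [← h2]
    simp only [norm, u, v, sub_a, sub_b, mul_a, mul_b]
    ring
  nlinarith [sq_nonneg (u - v), sq_nonneg (u + v)]

instance : EuclideanDomain Eisenstein where
  quotient := roundDiv
  quotient_zero x := by ext <;> simp [roundDiv, show norm 0 = 0 from rfl]
  remainder x y := x - y * roundDiv x y
  quotient_mul_add_remainder_eq x y := by ring
  r x y := (norm x).natAbs < (norm y).natAbs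
  r_wellFounded := InvImage.wf (fun x => (norm x).natAbs) Nat.lt_wfRel.wf
  remainder_lt x y hy := by
    have := norm_sub_mul_roundDiv_lt x hy
    have := norm_nonneg (x - y * roundDiv x y)
    omega
  mul_left_not_lt x y hy := by
    have h1 := norm_pos hy
    have h2 := norm_nonneg x
    have : norm x ≤ norm (x * y) := by rw [norm_mul]; nlinarith
    omega

open Complex

noncomputable def ωC : ℂ := exp (2 * Real.pi * I / 3)

lemma toC_def (x : Eisenstein) : toC x = x.a + x.b * ωC := rfl

lemma ωC_isPrimitiveRoot : IsPrimitiveRoot ωC 3 := by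
  simpa [ωC] using isPrimitiveRoot_exp 3 (by norm_num)

lemma ωC_sq : ωC ^ 2 = -1 - ωC := by
  have := ωC_isPrimitiveRoot.geom_sum_eq_zero (by norm_num)
  simp only [Finset.sum_range_succ, Finset.sum_range_zero] at this
  linear_combination this

lemma conj_ωC : starRingEnd ℂ ωC = -1 - ωC := by
  have hne : ωC ≠ 0 := ωC_isPrimitiveRoot.ne_zero (by norm_num)
  have h1 : starRingEnd ℂ ωC * ωC = 1 := by
    rw [ωC, ← exp_conj, ← exp_add, ← exp_zero]
    congr 1
    simp only [map_div₀, map_mul, map_ofNat, conj_ofReal, conj_I]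
    ring
  have h2 : (-1 - ωC) * ωC = 1 := by
    linear_combination ωC_isPrimitiveRoot.pow_eq_one - ωC * ωC_sq
  exact mul_right_cancel₀ hne (h1.trans h2.symm)

@[simp] lemma toC_add (x y : Eisenstein) : toC (x + y) = toC x + toC y := by
  simp only [toC_def, add_a, add_b]; push_cast; ring

@[simp] lemma toC_mul (x y : Eisenstein) : toC (x * y) = toC x * toC y := by
  simp only [toC_def, mul_a, mul_b]; push_cast
  linear_combination (-(x.b : ℂ) * y.b) * ωC_sq

@[simp] lemma toC_conj (x : Eisenstein) : toC (conj x) = starRingEnd ℂ (toC x) := by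
  simp only [toC_def, conj_a, conj_b, map_add, map_mul, map_intCast, conj_ωC]
  push_cast; ring

lemma toC_mk_zero (k : ℤ) : toC ⟨k, 0⟩ = k := by simp [toC_def]

lemma toC_mul_conj (x : Eisenstein) : toC x * starRingEnd ℂ (toC x) = norm x := by
  rw [← toC_conj, ← toC_mul, mul_conj, toC_mk_zero]

lemma toC_ne_zero {x : Eisenstein} (hx : x ≠ 0) : toC x ≠ 0 := fun h => by
  have := toC_mul_conj x
  rw [h, zero_mul, eq_comm, Int.cast_eq_zero, norm_eq_zero_iff] at this
  exact hx this

lemma toC_add_conj (x : Eisenstein) :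
    toC x + starRingEnd ℂ (toC x) = ((2 * x.a - x.b : ℤ) : ℂ) := by
  rw [← toC_conj, ← toC_add, ← toC_mk_zero]
  congr 1
  ext <;> simp; ring

lemma eE_add (z w : ℂ) : eE (z + w) = eE z * eE w := by
  rw [eE, eE, eE, ← exp_add, map_add]
  ring_nf

lemma eE_toC (x : Eisenstein) : eE (toC x) = 1 := by
  rw [eE, toC_add_conj, ← exp_int_mul_two_pi_mul_I (2 * x.a - x.b)]
  ring_nf

lemma dvd_of_eE_toC_div_eq_one {x : Eisenstein} {N : ℤ} (hN : N ≠ 0)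
    (h : eE (toC x / N) = 1) : N ∣ 2 * x.a - x.b := by
  rw [eE, map_div₀, map_intCast, ← add_div, toC_add_conj, exp_eq_one_iff] at h
  obtain ⟨k, hk⟩ := h
  field_simp at hk
  exact ⟨k, by exact_mod_cast hk⟩

lemma dvd_three_mul_of_forall_eE_eq_one {π r : Eisenstein} (hπ : π ≠ 0)
    (h : ∀ s, eE (toC r * toC s / toC π) = 1) : π ∣ 3 * r := by
  set w := r * conj π with hw
  have hN : norm π ≠ 0 := (norm_pos hπ).ne'
  have htrace : ∀ s, norm π ∣ 2 * (w * s).a - (w * s).b := fun s => by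
    refine dvd_of_eE_toC_div_eq_one hN ?_
    rw [← toC_mul_conj, toC_mul, toC_mul, toC_conj, ← h s]
    congr 1
    field_simp [toC_ne_zero hπ, toC_ne_zero (conj_ne_zero hπ), ← toC_conj]
  obtain ⟨k₁, hk₁⟩ := htrace 1
  obtain ⟨k₂, hk₂⟩ := htrace ω
  simp only [mul_one, mul_a, mul_b, ω_a, ω_b] at hk₁ hk₂
  clear_value w
  -- the traces of `w` and `w * ω` are `2a - b` and `-a - b`, so `N(π)` divides `3a` and `3b`
  have h3w : π * conj π ∣ 3 * r * conj π := by
    rw [mul_conj, mul_assoc, ← hw]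
    refine ⟨⟨k₁ - k₂, -k₁ - 2 * k₂⟩, ?_⟩
    ext <;> simp [three_eq]
    · linear_combination hk₁ - hk₂
    · linear_combination -hk₁ - 2 * hk₂
  exact (mul_dvd_mul_iff_right (conj_ne_zero hπ)).mp h3w

lemma IsResidueSystem.sum_comp_add {n : Eisenstein} {R : Finset Eisenstein}
    (hR : IsResidueSystem n R) {M : Type*} [AddCommMonoid M] {f : Eisenstein → M}
    (hf : ∀ x k, f (x + n * k) = f x) (t : Eisenstein) :
    ∑ x ∈ R, f (x + t) = ∑ x ∈ R, f x := by
  choose rep hrep using fun x => (hR x).exists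
  have rep_eq : ∀ x ∈ R, ∀ y, n ∣ y - x → rep y = x := fun x hx y hy =>
    (hR y).unique (hrep y) ⟨hx, hy⟩
  have f_rep : ∀ x, f (rep x) = f x := fun x => by
    obtain ⟨k, hk⟩ := (hrep x).2
    rw [← hf (rep x) k, ← hk, add_sub_cancel]
  refine Finset.sum_nbij' (fun x => rep (x + t)) (fun x => rep (x - t))
    (fun x _ => (hrep _).1) (fun x _ => (hrep _).1) (fun x hx => ?_) (fun x hx => ?_)
    (fun x _ => (f_rep _).symm)
  · obtain ⟨k, hk⟩ := (hrep (x + t)).2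
    exact rep_eq x hx _ ⟨-k, by linear_combination -hk⟩
  · obtain ⟨k, hk⟩ := (hrep (x - t)).2
    exact rep_eq x hx _ ⟨-k, by linear_combination -hk⟩

lemma eq_of_dvd_sub_of_mem_cubeRoots {p ζ₁ ζ₂ : Eisenstein} (hp3 : ¬ p ∣ 3)
    (h₁ : ζ₁ ∈ ({1, ω, ω ^ 2} : Set Eisenstein)) (h₂ : ζ₂ ∈ ({1, ω, ω ^ 2} : Set Eisenstein))
    (hp : p ∣ ζ₁ - ζ₂) : ζ₁ = ζ₂ := by
  -- distinct cube roots of unity differ by an element of norm 3, i.e. by a divisor of 3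
  have hdvd : ∀ δ, norm δ = 3 → δ ∣ 3 := fun δ hδ => ⟨conj δ, by rw [mul_conj, hδ, three_eq]⟩
  simp only [Set.mem_insert_iff, Set.mem_singleton_iff] at h₁ h₂
  rcases h₁ with rfl | rfl | rfl <;> rcases h₂ with rfl | rfl | rfl <;>
    first
      | rfl
      | exact absurd (hp.trans (hdvd _ (by simp [norm, sq]))) hp3

section CubicResidueSymbol

variable {χ : Eisenstein → Eisenstein → Eisenstein}

lemma IsCubicResidueSymbol.eq_of_prime_dvd_sub (hχ : IsCubicResidueSymbol χ) {p x y : Eisenstein}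
    (hp : Prime p) (hp3 : ¬ p ∣ 3) (hxy : p ∣ x - y) : χ x p = χ y p := by
  by_cases hx : p ∣ x
  · have hy : p ∣ y := by simpa using dvd_sub hx hxy
    rw [hχ.2.2.1 x p hp hp3 hx, hχ.2.2.1 y p hp hp3 hy]
  · have hy : ¬ p ∣ y := fun hy => hx (by simpa using dvd_add hy hxy)
    obtain ⟨hx₁, hx₂⟩ := hχ.2.2.2 x p hp hp3 hx
    obtain ⟨hy₁, hy₂⟩ := hχ.2.2.2 y p hp hp3 hy
    refine eq_of_dvd_sub_of_mem_cubeRoots hp3 hx₁ hy₁ ?_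
    have hpow := hxy.trans (sub_dvd_pow_sub_pow x y ((norm p - 1) / 3).toNat)
    simpa using dvd_add (dvd_sub hpow hx₂) hy₂

lemma IsCubicResidueSymbol.apply_isUnit (hχ : IsCubicResidueSymbol χ) {p x u : Eisenstein}
    (hp : Prime p) (hp3 : ¬ p ∣ 3) (hpx : ¬ p ∣ x) (hu : IsUnit u) : χ x u = 1 := by
  have hup : Prime (u * p) := (associated_unit_mul_left p u hu).symm.prime hp
  have hup3 : ¬ u * p ∣ 3 := fun h => hp3 ((dvd_mul_left p u).trans h)
  have hupx : ¬ u * p ∣ x := fun h => hpx ((dvd_mul_left p u).trans h)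
  obtain ⟨hp₁, hp₂⟩ := hχ.2.2.2 x p hp hp3 hpx
  obtain ⟨hup₁, hup₂⟩ := hχ.2.2.2 x (u * p) hup hup3 hupx
  rw [norm_mul, norm_eq_one_of_isUnit hu, one_mul] at hup₂
  -- `p` and `u * p` have the same norm, hence the same defining congruence modulo `p`
  have heq : χ x (u * p) = χ x p :=
    eq_of_dvd_sub_of_mem_cubeRoots hp3 hup₁ hp₁
      (by simpa using dvd_sub hp₂ ((dvd_mul_left p u).trans hup₂))
  rw [hχ.2.1] at heq
  have hne : χ x p ≠ 0 := fun h0 => hpx (hp.dvd_of_dvd_pow (by simpa [h0] using hp₂))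
  exact mul_right_cancel₀ hne (by rw [heq, one_mul])

lemma IsCubicResidueSymbol.eq_of_dvd_sub (hχ : IsCubicResidueSymbol χ) {p x y : Eisenstein}
    (hp : Prime p) (hp3 : ¬ p ∣ 3) (hpx : ¬ p ∣ x) (hpy : ¬ p ∣ y) {d : Eisenstein}
    (hd3 : IsCoprime 3 d) (hd : d ∣ x - y) : χ x d = χ y d := by
  induction d using UniqueFactorizationMonoid.induction_on_prime with
  | h₁ => rw [sub_eq_zero.mp (zero_dvd_iff.mp hd)]
  | h₂ u hu => rw [hχ.apply_isUnit hp hp3 hpx hu, hχ.apply_isUnit hp hp3 hpy hu]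
  | h₃ d q hd' hq ih =>
    have hq3 : ¬ q ∣ 3 := fun h => hq.not_isUnit (hd3.isUnit_of_dvd' h (dvd_mul_right q d))
    rw [hχ.2.1 x q d, hχ.2.1 y q d,
      hχ.eq_of_prime_dvd_sub hq hq3 ((dvd_mul_right q d).trans hd),
      ih hd3.of_mul_right_right ((dvd_mul_left d q).trans hd)]

lemma IsCubicResidueSymbol.apply_add_mul_sq_mul (hχ : IsCubicResidueSymbol χ) {π m : Eisenstein}
    (hπ : Prime π) (hπ3 : ¬ π ∣ 3) (hm3 : IsCoprime 3 m) (x s : Eisenstein) :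
    χ (x + π * m * s) (π ^ 2 * m) = χ x (π ^ 2 * m) := by
  have hsplit : ∀ z, χ z (π ^ 2 * m) = χ z π ^ 2 * χ z m := fun z => by
    rw [hχ.2.1, sq, hχ.2.1, sq]
  have hπ_dvd : π ∣ x + π * m * s - x := ⟨m * s, by ring⟩
  rw [hsplit, hsplit, hχ.eq_of_prime_dvd_sub hπ hπ3 hπ_dvd]
  by_cases hπx : π ∣ x
  · rw [hχ.2.2.1 x π hπ hπ3 hπx, zero_pow two_ne_zero, zero_mul, zero_mul]
  · have hπy : ¬ π ∣ x + π * m * s := fun h => hπx (by simpa using dvd_sub h hπ_dvd)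
    rw [hχ.eq_of_dvd_sub hπ hπ3 hπy hπx hm3 ⟨π * s, by ring⟩]

noncomputable def gTerm (χ : Eisenstein → Eisenstein → Eisenstein) (r n x : Eisenstein) : ℂ :=
  toC (χ x n) * eE (toC r * toC x / toC n)

lemma gTerm_add_mul (hχ : IsCubicResidueSymbol χ) {π m : Eisenstein} (hπ : Prime π)
    (hπ3 : ¬ π ∣ 3) (hm3 : IsCoprime 3 m) (hm : m ≠ 0)
    (r x s : Eisenstein) :
    gTerm χ r (π ^ 2 * m) (x + π * m * s)
      = eE (toC r * toC s / toC π) * gTerm χ r (π ^ 2 * m) x := by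
  have hπC := toC_ne_zero hπ.ne_zero
  have hmC := toC_ne_zero hm
  have harg : toC r * toC (x + π * m * s) / toC (π ^ 2 * m)
      = toC r * toC s / toC π + toC r * toC x / toC (π ^ 2 * m) := by
    simp only [toC_add, toC_mul, sq]
    field_simp
    ring
  rw [gTerm, gTerm, hχ.apply_add_mul_sq_mul hπ hπ3 hm3, harg, eE_add]
  ring

lemma gTerm_add_mul_self (hχ : IsCubicResidueSymbol χ) {π m : Eisenstein} (hπ : Prime π)
    (hπ3 : ¬ π ∣ 3) (hm3 : IsCoprime 3 m) (hm : m ≠ 0)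
    (r x k : Eisenstein) :
    gTerm χ r (π ^ 2 * m) (x + π ^ 2 * m * k) = gTerm χ r (π ^ 2 * m) x := by
  have hπC := toC_ne_zero hπ.ne_zero
  rw [show π ^ 2 * m * k = π * m * (π * k) by ring, gTerm_add_mul hχ hπ hπ3 hm3 hm,
    show toC r * toC (π * k) / toC π = toC (r * k) by simp only [toC_mul]; field_simp,
    eE_toC, one_mul]

end CubicResidueSymbol

end Eisenstein

open Eisenstein in
/-- If `π` is prime, `n ≡ 1 (mod 3)`, `π² ∣ n` and `π ∤ r`, then `g(r,n) = 0`. -/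
theorem statement_13 (χ : Eisenstein → Eisenstein → Eisenstein)
    (hχ : IsCubicResidueSymbol χ) (π r n : Eisenstein) (hπ : Prime π)
    (hn : (3 : Eisenstein) ∣ n - 1) (h2 : π ^ 2 ∣ n) (hr : ¬ π ∣ r)
    (R : Finset Eisenstein) (hR : IsResidueSystem n R) :
    gSum χ r n R = 0 := by
  have hπ3 : ¬ π ∣ 3 := fun h => hπ.not_isUnit <| isUnit_of_dvd_one <| by
    simpa using dvd_sub ((dvd_pow_self π two_ne_zero).trans h2) (h.trans hn)
  obtain ⟨m, rfl⟩ := h2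
  have hm3 : IsCoprime 3 m := by
    obtain ⟨k, hk⟩ := hn
    exact ⟨-k, π ^ 2, by linear_combination hk⟩
  have hm : m ≠ 0 := by
    rintro rfl
    exact not_isUnit_three (isCoprime_zero_right.mp hm3)
  have htwist : ∀ s,
      gSum χ r (π ^ 2 * m) R = eE (toC r * toC s / toC π) * gSum χ r (π ^ 2 * m) R :=
    fun s => calc
      gSum χ r (π ^ 2 * m) R = ∑ x ∈ R, gTerm χ r (π ^ 2 * m) (x + π * m * s) :=
        (hR.sum_comp_add (gTerm_add_mul_self hχ hπ hπ3 hm3 hm r) _).symm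
      _ = _ := by
        simp only [gTerm_add_mul hχ hπ hπ3 hm3 hm, ← Finset.mul_sum]
        rfl
  by_contra hg
  have hone : ∀ s, eE (toC r * toC s / toC π) = 1 := fun s =>
    mul_right_cancel₀ hg ((htwist s).symm.trans (one_mul _).symm)
  rcases hπ.dvd_or_dvd (dvd_three_mul_of_forall_eE_eq_one hπ.ne_zero hone) with h | h
  · exact hπ3 h
  · exact hr h
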